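/- Let φ be a differentiable convex function on a bounded open convex set Ω ⊆ ℝⁿ, and suppose S_φ(x₀,h) and S_φ(x₀,2h) are sections with closure of S_φ(x₀,2h) in Ω, and that d := dist(S_φ(x₀,h), ∂S_φ(x₀,2h)) > 0. Then the gradient of φ is bounded on S_φ(x₀,h) by sup_{S_φ(x₀,h)} |∇φ − ∇φ(x₀)| ≤ h/d. -/

import Mathlib

/-!
Subtracting the tangent plane of `φ` at `x₀` gives a convex function `ℓ ≥ 0` with
`S₁ = {ℓ < h}` and `S₂ = {ℓ < 2h}`, and the distance hypothesis puts the `d`-ball around every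
point of `S₁` inside `S₂`. If `Dℓ(x) u = k > h / d` for a unit vector `u`, then along the ray
`x + t u` the function `ℓ` grows at rate at least `k`, so it reaches every level `m < h` at some
`w ∈ S₁` before `t = h / k < d`. Since `ℓ < 2h` on the `d`-ball around `w`, the tangent line at `w`
gives `d k ≤ 2h - m`, which is false for `m` close to `h`.
-/

open Metric

section

variable {E : Type*} [NormedAddCommGroup E] [NormedSpace ℝ E] {Ω : Set E} {f : E → ℝ}

theorem ConvexOn.add_fderiv_sub_le (hf : ConvexOn ℝ Ω f) {a b : E} (ha : a ∈ Ω) (hb : b ∈ Ω)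
    (hfa : DifferentiableAt ℝ f a) : f a + fderiv ℝ f a (b - a) ≤ f b := by
  have hline : HasDerivAt (f ∘ AffineMap.lineMap (k := ℝ) a b) (fderiv ℝ f a (b - a)) 0 :=
    hfa.hasFDerivAt.comp_hasDerivAt_of_eq 0 AffineMap.hasDerivAt_lineMap (by simp)
  have := (hf.comp_affineMap (AffineMap.lineMap a b)).le_slope_of_hasDerivAt
    (by simpa using ha) (by simpa using hb) zero_lt_one hline
  simp only [slope, Function.comp_apply, AffineMap.lineMap_apply_one,
    AffineMap.lineMap_apply_zero, sub_zero, inv_one, one_smul, vsub_eq_sub] at this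
  linarith

theorem ConvexOn.fderiv_apply_sub_le (hf : ConvexOn ℝ Ω f) {a b : E} (ha : a ∈ Ω) (hb : b ∈ Ω)
    (hfa : DifferentiableAt ℝ f a) (hfb : DifferentiableAt ℝ f b) :
    fderiv ℝ f a (b - a) ≤ fderiv ℝ f b (b - a) := by
  have hab := hf.add_fderiv_sub_le ha hb hfa
  have hba := hf.add_fderiv_sub_le hb ha hfb
  rw [← neg_sub, map_neg] at hba
  linarith

theorem ConvexOn.fderiv_apply_le_fderiv_add_smul_apply (hf : ConvexOn ℝ Ω f) {x u : E} {s : ℝ}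
    (hs : 0 ≤ s) (hx : x ∈ Ω) (hy : x + s • u ∈ Ω)
    (hfx : DifferentiableAt ℝ f x) (hfy : DifferentiableAt ℝ f (x + s • u)) :
    fderiv ℝ f x u ≤ fderiv ℝ f (x + s • u) u := by
  rcases hs.eq_or_lt with rfl | hs
  · simp
  have := hf.fderiv_apply_sub_le hx hy hfx hfy
  rw [add_sub_cancel_left, map_smul, map_smul, smul_eq_mul, smul_eq_mul] at this
  exact le_of_mul_le_mul_left this hs

theorem ball_subset_of_forall_le_dist_frontier [FiniteDimensional ℝ E] {s : Set E} {x : E}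
    {d : ℝ} (hx : x ∈ s) (hd : ∀ y ∈ frontier s, d ≤ dist x y) : ball x d ⊆ s := by
  rcases eq_or_ne s Set.univ with rfl | hs
  · exact Set.subset_univ _
  obtain ⟨y, hy, hxy⟩ := exists_mem_frontier_infDist_compl_eq_dist hx hs
  exact (ball_subset_ball (hxy ▸ hd y hy)).trans ball_infDist_compl_subset

theorem mul_fderiv_apply_le_of_ball_subset_sublevel (hΩ : IsOpen Ω) (hf : ConvexOn ℝ Ω f)
    (hfd : DifferentiableOn ℝ f Ω) {w u : E} {c d : ℝ} (hd : 0 < d)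
    (hball : ball w d ⊆ {y ∈ Ω | f y < c}) (hu : ‖u‖ = 1) :
    d * fderiv ℝ f w u ≤ c - f w := by
  obtain ⟨hw, hwc⟩ := hball (mem_ball_self hd)
  set a := fderiv ℝ f w u
  rcases le_or_gt a 0 with ha | ha
  · linarith [mul_nonpos_of_nonneg_of_nonpos hd.le ha]
  by_contra! hlt
  -- the tangent line at `w` reaches the level `c` at `t`, still inside the ball
  set t := (c - f w) / a
  have ht : t * a = c - f w := div_mul_cancel₀ _ ha.ne'
  have hmem : w + t • u ∈ ball w d := by
    rw [mem_ball, dist_self_add_left, norm_smul, hu, mul_one, Real.norm_eq_abs,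
      abs_of_nonneg (div_nonneg (by linarith) ha.le), div_lt_iff₀ ha]
    linarith
  obtain ⟨hmemΩ, hlt'⟩ := hball hmem
  have := hf.add_fderiv_sub_le hw hmemΩ (hfd.differentiableAt (hΩ.mem_nhds hw))
  rw [add_sub_cancel_left, map_smul, smul_eq_mul] at this
  linarith

theorem fderiv_apply_le_div_of_ball_subset_sublevel (hΩ : IsOpen Ω) (hf : ConvexOn ℝ Ω f)
    (hfd : DifferentiableOn ℝ f Ω) {h d : ℝ} (hd : 0 < d)
    (hball : ∀ w ∈ Ω, f w < h → ball w d ⊆ {y ∈ Ω | f y < 2 * h})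
    {x u : E} (hx : x ∈ Ω) (hx_nonneg : 0 ≤ f x) (hxh : f x < h) (hu : ‖u‖ = 1) :
    fderiv ℝ f x u ≤ h / d := by
  have hdiffAt : ∀ y ∈ Ω, DifferentiableAt ℝ f y := fun y hy =>
    hfd.differentiableAt (hΩ.mem_nhds hy)
  set k := fderiv ℝ f x u
  by_contra! hk
  have hkd : h < k * d := (div_lt_iff₀ hd).1 hk
  have hk₀ : 0 < k := (div_nonneg (hx_nonneg.trans hxh.le) hd.le).trans_lt hk
  have hray : ∀ t ∈ Set.Icc 0 (h / k), x + t • u ∈ Ω := fun t ht => by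
    refine (hball x hx hxh ?_).1
    rw [mem_ball, dist_self_add_left, norm_smul, hu, mul_one, Real.norm_eq_abs,
      abs_of_nonneg ht.1]
    exact ht.2.trans_lt ((div_lt_iff₀ hk₀).2 (by linarith))
  have hreach : h ≤ f (x + (h / k) • u) := by
    have := hf.add_fderiv_sub_le hx (hray _ ⟨div_nonneg (hx_nonneg.trans hxh.le) hk₀.le, le_rfl⟩)
      (hdiffAt x hx)
    rw [add_sub_cancel_left, map_smul, smul_eq_mul, div_mul_cancel₀ _ hk₀.ne'] at this
    linarith
  obtain ⟨m, hm_gt, hm_lt⟩ := exists_between (max_lt hxh (by linarith : 2 * h - k * d < h))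
  obtain ⟨s, hs, hfs⟩ := intermediate_value_Icc (div_nonneg (hx_nonneg.trans hxh.le) hk₀.le)
    (hfd.continuousOn.comp (by fun_prop) hray)
    ⟨by simpa using (le_max_left _ _).trans hm_gt.le, hm_lt.le.trans hreach⟩
  replace hfs : f (x + s • u) = m := hfs
  have hw := hray s hs
  have hwh : f (x + s • u) < h := hfs ▸ hm_lt
  have hslope := mul_fderiv_apply_le_of_ball_subset_sublevel hΩ hf hfd hd (hball _ hw hwh) hu
  have hmono := hf.fderiv_apply_le_fderiv_add_smul_apply hs.1 hx hw (hdiffAt x hx) (hdiffAt _ hw)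
  linarith [mul_le_mul_of_nonneg_left hmono hd.le, le_max_right (f x) (2 * h - k * d)]

theorem norm_fderiv_le_div_of_ball_subset_sublevel (hΩ : IsOpen Ω) (hf : ConvexOn ℝ Ω f)
    (hfd : DifferentiableOn ℝ f Ω) {h d : ℝ} (hd : 0 < d)
    (hball : ∀ w ∈ Ω, f w < h → ball w d ⊆ {y ∈ Ω | f y < 2 * h})
    {x : E} (hx : x ∈ Ω) (hx_nonneg : 0 ≤ f x) (hxh : f x < h) :
    ‖fderiv ℝ f x‖ ≤ h / d := by
  refine ContinuousLinearMap.opNorm_le_of_unit_norm (div_nonneg (hx_nonneg.trans hxh.le) hd.le)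
    fun u hu => Real.norm_eq_abs _ ▸ abs_le.2 ⟨?_, ?_⟩
  · have := fderiv_apply_le_div_of_ball_subset_sublevel hΩ hf hfd hd hball hx hx_nonneg hxh
      (u := -u) (by rwa [norm_neg])
    rw [map_neg] at this
    linarith
  · exact fderiv_apply_le_div_of_ball_subset_sublevel hΩ hf hfd hd hball hx hx_nonneg hxh hu

end

theorem gradient_bound_on_section_general
    (n : ℕ) (Ω : Set (EuclideanSpace ℝ (Fin n)))
    (hΩo : IsOpen Ω)
    (φ : EuclideanSpace ℝ (Fin n) → ℝ)
    (hconv : ConvexOn ℝ Ω φ) (hdiff : DifferentiableOn ℝ φ Ω)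
    (x₀ : EuclideanSpace ℝ (Fin n)) (hx₀ : x₀ ∈ Ω)
    (h d : ℝ) (hd : 0 < d)
    (S₁ S₂ : Set (EuclideanSpace ℝ (Fin n)))
    (hS₁ : S₁ = {y ∈ Ω | φ y < φ x₀ + fderiv ℝ φ x₀ (y - x₀) + h})
    (hS₂ : S₂ = {y ∈ Ω | φ y < φ x₀ + fderiv ℝ φ x₀ (y - x₀) + 2 * h})
    (hdist : ∀ x ∈ S₁, ∀ y ∈ frontier S₂, d ≤ dist x y) :
    ∀ x ∈ S₁, ‖fderiv ℝ φ x - fderiv ℝ φ x₀‖ ≤ h / d := by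
  set L := fderiv ℝ φ x₀
  set ℓ : EuclideanSpace ℝ (Fin n) → ℝ := fun y => φ y - L y + (L x₀ - φ x₀)
  have hsection : ∀ c, {y ∈ Ω | φ y < φ x₀ + L (y - x₀) + c} = {y ∈ Ω | ℓ y < c} := by
    intro c
    refine Set.ext fun y => and_congr_right fun _ => ?_
    simp only [ℓ, map_sub]
    constructor <;> intro <;> linarith
  rw [hsection] at hS₁ hS₂
  subst hS₁ hS₂
  have hℓ_conv : ConvexOn ℝ Ω ℓ := (hconv.sub (L.toLinearMap.concaveOn hconv.1)).add_const _
  have hℓ_deriv : ∀ y ∈ Ω, HasFDerivAt ℓ (fderiv ℝ φ y - L) y := fun y hy =>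
    (((hdiff.differentiableAt (hΩo.mem_nhds hy)).hasFDerivAt).sub L.hasFDerivAt).add_const _
  have hℓ_nonneg : ∀ y ∈ Ω, 0 ≤ ℓ y := fun y hy => by
    have := hconv.add_fderiv_sub_le hx₀ hy (hdiff.differentiableAt (hΩo.mem_nhds hx₀))
    simp only [ℓ]
    rw [map_sub] at this
    linarith
  have hball : ∀ w ∈ Ω, ℓ w < h → ball w d ⊆ {y ∈ Ω | ℓ y < 2 * h} := fun w hw hwh =>
    ball_subset_of_forall_le_dist_frontier ⟨hw, by linarith [hℓ_nonneg w hw]⟩ (hdist w ⟨hw, hwh⟩)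
  rintro x ⟨hx, hxh⟩
  rw [← (hℓ_deriv x hx).fderiv]
  exact norm_fderiv_le_div_of_ball_subset_sublevel hΩo hℓ_conv
    (fun y hy => (hℓ_deriv y hy).differentiableAt.differentiableWithinAt) hd hball hx
    (hℓ_nonneg x hx) hxh

/-- Gradient bound on sections: if `d = dist(S_φ(x₀,h), ∂S_φ(x₀,2h)) > 0`, then
`|∇φ - ∇φ(x₀)| ≤ h/d` on `S_φ(x₀,h)`. -/
theorem gradient_bound_on_section
    (n : ℕ) (Ω : Set (EuclideanSpace ℝ (Fin n)))
    (hΩo : IsOpen Ω) (hΩc : Convex ℝ Ω) (hΩb : Bornology.IsBounded Ω)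
    (φ : EuclideanSpace ℝ (Fin n) → ℝ)
    (hconv : ConvexOn ℝ Ω φ) (hdiff : DifferentiableOn ℝ φ Ω)
    (x₀ : EuclideanSpace ℝ (Fin n)) (hx₀ : x₀ ∈ Ω)
    (h d : ℝ) (hh : 0 < h) (hd : 0 < d)
    (S₁ S₂ : Set (EuclideanSpace ℝ (Fin n)))
    (hS₁ : S₁ = {y ∈ Ω | φ y < φ x₀ + fderiv ℝ φ x₀ (y - x₀) + h})
    (hS₂ : S₂ = {y ∈ Ω | φ y < φ x₀ + fderiv ℝ φ x₀ (y - x₀) + 2 * h})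
    (hcl : closure S₂ ⊆ Ω)
    (hdist : ∀ x ∈ S₁, ∀ y ∈ frontier S₂, d ≤ dist x y) :
    ∀ x ∈ S₁, ‖fderiv ℝ φ x - fderiv ℝ φ x₀‖ ≤ h / d :=
  gradient_bound_on_section_general n Ω hΩo φ hconv hdiff x₀ hx₀ h d hd S₁ S₂ hS₁ hS₂ hdist
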